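/- arXiv:1407.0054 — 2 statements merged into one kernel-verified Lean document; each statement's English description precedes it below -/
import Mathlib

section
/- For every positive integer q and integers B, L with L ≥ 1, the sum S := Σ_{n=1}^{q-1} gcd(n, q) · |Σ_{b=B+1}^{B+L} e(-nb/q)| satisfies S ≪ d(q) · q · log q, where e(t) = exp(2πit) and d(q) is the number of divisors of q. More precisely, there is an absolute constant C such that S ≤ C · d(q) · q · log(q + 1). -/
open Complex Real

/-- `e(t) = exp(2πit)`. -/
noncomputable def e (t : ℝ) : ℂ := Complex.exp (2 * Real.pi * Complex.I * t)

/-!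
For `0 < n < q` the inner sum is a geometric sum with ratio `e(-n/q)`, so its norm is at most
`1 / |sin (π n / q)|`, and Jordan's inequality `sin (π t) ≥ 2 t (1 - t)` bounds this by
`q / 2 * (1 / n + 1 / (q - n))`. The symmetry `n ↦ q - n` turns the whole sum into
`q * ∑ gcd(n, q) / n`. Bounding `gcd(n, q)` by the sum of the divisors `d ∣ q` that divide `n`
and swapping the sums gives at most `d(q)` harmonic sums, each `≤ H_{q-1} ≤ 2 log (q + 1)`.
-/

open Finset

theorem sub_one_mul_sum_Ico_zpow {K : Type*} [Field K] {z : K} (hz : z ≠ 0) {a m : ℤ}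
    (h : a ≤ m) :
    (z - 1) * ∑ b ∈ Ico a m, z ^ b = z ^ m - z ^ a := by
  induction m, h using Int.leInduction with
  | base => simp
  | succ m hm ih =>
    rw [← insert_Ico_right_eq_Ico_add_one_of_not_isMax hm (not_isMax m),
      sum_insert (by simp), mul_add, ih, zpow_add_one₀ hz]
    ring

theorem norm_sub_one_mul_norm_sum_Icc_zpow_le {K : Type*} [NormedField K] {z : K} (hz : ‖z‖ = 1)
    (a c : ℤ) :
    ‖z - 1‖ * ‖∑ b ∈ Icc a c, z ^ b‖ ≤ 2 := by
  rcases lt_or_ge (c + 1) a with h | h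
  · simp [Icc_eq_empty_of_lt (by omega : c < a)]
  have hz0 : z ≠ 0 := by rintro rfl; simp at hz
  rw [← norm_mul, ← Ico_add_one_right_eq_Icc, sub_one_mul_sum_Ico_zpow hz0 h]
  calc ‖z ^ (c + 1) - z ^ a‖ ≤ ‖z ^ (c + 1)‖ + ‖z ^ a‖ := norm_sub_le _ _
    _ = 2 := by rw [norm_zpow, norm_zpow, hz, one_zpow, one_zpow]; norm_num

theorem e_mul_intCast (t : ℝ) (b : ℤ) : e (t * b) = e t ^ b := by
  rw [e, e, ← Complex.exp_int_mul]
  push_cast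
  congr 1
  ring

theorem e_eq_exp_I_mul (t : ℝ) : e t = Complex.exp (I * ↑(2 * π * t)) := by
  rw [e]
  push_cast
  ring_nf

theorem norm_e (t : ℝ) : ‖e t‖ = 1 := by
  rw [e_eq_exp_I_mul, mul_comm, Complex.norm_exp_ofReal_mul_I]

theorem norm_e_sub_one (t : ℝ) : ‖e t - 1‖ = 2 * |Real.sin (π * t)| := by
  rw [e_eq_exp_I_mul, Complex.norm_exp_I_mul_ofReal_sub_one, norm_mul, Real.norm_two,
    Real.norm_eq_abs]
  ring_nf

theorem abs_sin_mul_norm_sum_Icc_e_le (t : ℝ) (a c : ℤ) :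
    |Real.sin (π * t)| * ‖∑ b ∈ Icc a c, e (t * b)‖ ≤ 1 := by
  have h := norm_sub_one_mul_norm_sum_Icc_zpow_le (norm_e t) a c
  simp only [norm_e_sub_one, ← e_mul_intCast] at h
  linarith

theorem Real.two_mul_le_sin_pi_mul {t : ℝ} (h0 : 0 ≤ t) (h1 : t ≤ 1 / 2) :
    2 * t ≤ Real.sin (π * t) := by
  have := Real.mul_le_sin (by positivity : 0 ≤ π * t) (by nlinarith [Real.pi_pos])
  rwa [← mul_assoc, div_mul_cancel₀ _ Real.pi_ne_zero] at this

theorem Real.two_mul_mul_one_sub_le_sin_pi_mul {t : ℝ} (h0 : 0 ≤ t) (h1 : t ≤ 1) :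
    2 * t * (1 - t) ≤ Real.sin (π * t) := by
  rcases le_total t (1 / 2) with h | h
  · nlinarith [Real.two_mul_le_sin_pi_mul h0 h]
  · have h' := Real.two_mul_le_sin_pi_mul (t := 1 - t) (by linarith) (by linarith)
    rw [show π * (1 - t) = π - π * t by ring, Real.sin_pi_sub] at h'
    nlinarith

theorem norm_sum_Icc_e_le {n q : ℕ} (hn : 0 < n) (hnq : n < q) (a c : ℤ) :
    ‖∑ b ∈ Icc a c, e (-((n : ℝ) * b / q))‖ ≤ q / 2 * (1 / n + 1 / (q - n)) := by
  have hn' : (0 : ℝ) < n := by exact_mod_cast hn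
  have hnq' : (n : ℝ) < q := by exact_mod_cast hnq
  have hq : (q : ℝ) ≠ 0 := by linarith
  have hqn : (q : ℝ) - n ≠ 0 := by linarith
  have ht0 : 0 < (n / q : ℝ) := div_pos hn' (by linarith)
  have ht1 : (n / q : ℝ) < 1 := (div_lt_one (by linarith)).mpr hnq'
  have hsin := Real.two_mul_mul_one_sub_le_sin_pi_mul ht0.le ht1.le
  have hbound := abs_sin_mul_norm_sum_Icc_e_le (-(n / q)) a c
  rw [mul_neg, Real.sin_neg, abs_neg, abs_of_pos (by nlinarith)] at hbound
  have hsum :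
      ∑ b ∈ Icc a c, e (-((n : ℝ) * b / q)) = ∑ b ∈ Icc a c, e (-(n / q) * b) := by
    congr! 2; ring
  have hpartial : (q / 2 * (1 / n + 1 / (q - n)) : ℝ) = 1 / (2 * (n / q) * (1 - n / q)) := by
    rw [one_sub_div hq]
    field_simp
    ring
  rw [hsum, hpartial, le_div_iff₀ (by nlinarith)]
  nlinarith [norm_nonneg (∑ b ∈ Icc a c, e (-(n / q) * b))]

theorem sum_Icc_one_sub_reflect {M : Type*} [AddCommMonoid M] (f : ℕ → M) (q : ℕ) :
    ∑ n ∈ Icc 1 (q - 1), f (q - n) = ∑ n ∈ Icc 1 (q - 1), f n := by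
  refine sum_nbij' (q - ·) (q - ·) ?_ ?_ ?_ ?_ fun _ _ => rfl <;>
    intro n hn <;> simp only [mem_Icc] at hn ⊢ <;> omega

theorem sum_Icc_gcd_div_sub_eq (q : ℕ) :
    ∑ n ∈ Icc 1 (q - 1), (Nat.gcd n q : ℝ) / ((q : ℝ) - n)
      = ∑ n ∈ Icc 1 (q - 1), (Nat.gcd n q : ℝ) / n := by
  rw [← sum_Icc_one_sub_reflect (fun n => (Nat.gcd n q : ℝ) / n)]
  refine sum_congr rfl fun n hn => ?_
  have hnq : n ≤ q := by simp only [mem_Icc] at hn; omega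
  rw [Nat.gcd_self_sub_left hnq, Nat.cast_sub hnq]

theorem gcd_div_le_sum_divisors_dvd (n : ℕ) {q : ℕ} (hq : q ≠ 0) :
    (Nat.gcd n q : ℝ) / n ≤ ∑ d ∈ q.divisors, if d ∣ n then (d : ℝ) / n else 0 := by
  have hmem : Nat.gcd n q ∈ q.divisors := Nat.mem_divisors.mpr ⟨Nat.gcd_dvd_right n q, hq⟩
  simpa [Nat.gcd_dvd_left n q] using
    single_le_sum (f := fun d => if d ∣ n then (d : ℝ) / n else 0) (fun _ _ => by positivity)
      hmem

theorem sum_Icc_filter_dvd_div_le_harmonic {d : ℕ} (hd : 0 < d) (N : ℕ) :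
    ∑ n ∈ Icc 1 N with d ∣ n, (d : ℝ) / n ≤ harmonic N := by
  have hsub : {n ∈ Icc 1 N | d ∣ n} ⊆ (Icc 1 N).image (· * d) := by
    intro n hn
    obtain ⟨⟨hn1, hnN⟩, m, rfl⟩ := by simpa only [mem_filter, mem_Icc] using hn
    refine mem_image.mpr ⟨m, mem_Icc.mpr ⟨?_, ?_⟩, mul_comm m d⟩ <;> nlinarith
  calc ∑ n ∈ Icc 1 N with d ∣ n, (d : ℝ) / n
      ≤ ∑ n ∈ (Icc 1 N).image (· * d), (d : ℝ) / n :=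
        sum_le_sum_of_subset_of_nonneg hsub fun _ _ _ => by positivity
    _ = ∑ m ∈ Icc 1 N, (m : ℝ)⁻¹ := by
        rw [sum_image fun _ _ _ _ h => Nat.eq_of_mul_eq_mul_right hd h]
        refine sum_congr rfl fun m _ => ?_
        have : (d : ℝ) ≠ 0 := by positivity
        push_cast
        field_simp
    _ = harmonic N := by simp [harmonic_eq_sum_Icc]

theorem sum_Icc_gcd_div_le {q : ℕ} (hq : q ≠ 0) (N : ℕ) :
    ∑ n ∈ Icc 1 N, (Nat.gcd n q : ℝ) / n ≤ q.divisors.card * harmonic N := by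
  calc ∑ n ∈ Icc 1 N, (Nat.gcd n q : ℝ) / n
      ≤ ∑ n ∈ Icc 1 N, ∑ d ∈ q.divisors, if d ∣ n then (d : ℝ) / n else 0 :=
        sum_le_sum fun n _ => gcd_div_le_sum_divisors_dvd n hq
    _ = ∑ d ∈ q.divisors, ∑ n ∈ Icc 1 N with d ∣ n, (d : ℝ) / n := by
        rw [sum_comm]
        simp only [sum_filter]
    _ ≤ ∑ _d ∈ q.divisors, (harmonic N : ℝ) :=
        sum_le_sum fun d hd => sum_Icc_filter_dvd_div_le_harmonic (Nat.pos_of_mem_divisors hd) N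
    _ = q.divisors.card * harmonic N := by simp

theorem harmonic_le_two_mul_log_add_two (n : ℕ) :
    (harmonic n : ℝ) ≤ 2 * Real.log (n + 2) := by
  rcases Nat.eq_zero_or_pos n with rfl | hn
  · simp only [harmonic_zero, Rat.cast_zero, CharP.cast_eq_zero, zero_add]
    positivity
  have hn' : (1 : ℝ) ≤ n := by exact_mod_cast hn
  have h1 : 1 ≤ Real.log (n + 2) := by
    rw [Real.le_log_iff_exp_le (by positivity)]
    linarith [Real.exp_one_lt_d9]
  have h2 : Real.log n ≤ Real.log (n + 2) := Real.log_le_log (by positivity) (by linarith)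
  linarith [harmonic_le_one_add_log n]

theorem kloosterman_lemma1 :
    ∃ C : ℝ, 0 < C ∧ ∀ (q : ℕ) (B L : ℤ), 0 < q → 1 ≤ L →
      ∑ n ∈ Finset.Icc 1 (q - 1), (Nat.gcd n q : ℝ) *
          ‖∑ b ∈ Finset.Icc (B + 1) (B + L), e (-(((n : ℝ) * (b : ℝ)) / q))‖
        ≤ C * (Nat.divisors q).card * q * Real.log (q + 1) := by
  refine ⟨2, two_pos, fun q B L hq _ => ?_⟩
  have hlog : ((q - 1 : ℕ) : ℝ) + 2 = q + 1 := by
    rw [Nat.cast_sub hq]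
    ring
  calc ∑ n ∈ Icc 1 (q - 1), (Nat.gcd n q : ℝ) *
          ‖∑ b ∈ Icc (B + 1) (B + L), e (-((n : ℝ) * b / q))‖
      ≤ ∑ n ∈ Icc 1 (q - 1), (Nat.gcd n q : ℝ) * (q / 2 * (1 / n + 1 / (q - n))) := by
        refine sum_le_sum fun n hn => mul_le_mul_of_nonneg_left ?_ (by positivity)
        simp only [mem_Icc] at hn
        exact norm_sum_Icc_e_le (by omega) (by omega) _ _
    _ = q * ∑ n ∈ Icc 1 (q - 1), (Nat.gcd n q : ℝ) / n := by
        have hsplit : ∀ n ∈ Icc 1 (q - 1), (Nat.gcd n q : ℝ) * (q / 2 * (1 / n + 1 / (q - n)))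
            = q / 2 * ((Nat.gcd n q : ℝ) / n) + q / 2 * ((Nat.gcd n q : ℝ) / (q - n)) :=
          fun _ _ => by ring
        rw [sum_congr rfl hsplit, sum_add_distrib, ← mul_sum, ← mul_sum, sum_Icc_gcd_div_sub_eq]
        ring
    _ ≤ q * (q.divisors.card * harmonic (q - 1)) := by
        gcongr
        exact sum_Icc_gcd_div_le hq.ne' _
    _ ≤ 2 * q.divisors.card * q * Real.log (q + 1) := by
        have hH := harmonic_le_two_mul_log_add_two (q - 1)
        rw [hlog] at hH
        have hpos : (0 : ℝ) ≤ q * q.divisors.card := by positivity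
        nlinarith
end

section
/- Let p be a prime with p > 3 and a, b integers with gcd(a, b, p) = 1. Then the rational function R(x) = (a x⁵ + b)/x³ over the algebraic closure of F_p cannot be written as h(x)^p − h(x) for any rational function h(x) over the algebraic closure of F_p. -/
/-!
If `v` is a valuation with `1 < v (h ^ p - h)`, then `1 < v h`, so `v h < v (h ^ p)` and
`v (h ^ p - h) = v h ^ p`: every pole order of `h ^ p - h` is divisible by `p`.
When `p ∤ a`, `(a x⁵ + b) / x³` has a pole of order `2` at infinity; otherwise `p ∤ b` and it has
a pole of order `3` at `0`. Neither order is divisible by a prime `p > 3`.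
-/

open Polynomial WithZero

namespace Valuation

variable {F : Type*} [Field F]

theorem map_pow_sub_self_of_one_lt {Γ₀ : Type*} [LinearOrderedCommGroupWithZero Γ₀]
    (v : Valuation F Γ₀) {n : ℕ} (hn : n ≠ 0) {x : F} (h : 1 < v (x ^ n - x)) :
    v (x ^ n - x) = v x ^ n := by
  rcases le_or_gt (v x) 1 with hx | hx
  · have : v (x ^ n - x) ≤ 1 :=
      (v.map_sub _ _).trans (max_le (by simpa using pow_le_one₀ zero_le hx) hx)
    exact absurd h this.not_gt
  obtain rfl | hn := eq_or_ne n 1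
  · simp at h
  rw [v.map_sub_eq_of_lt_left, map_pow]
  simpa using pow_lt_pow_right₀ hx (by omega : 1 < n)

theorem dvd_of_map_pow_sub_self_eq_exp (v : Valuation F ℤᵐ⁰) {p : ℕ} (hp : p ≠ 0) {x : F}
    {m : ℤ} (hm : 0 < m) (h : v (x ^ p - x) = exp m) : (p : ℤ) ∣ m := by
  have hpow := v.map_pow_sub_self_of_one_lt hp (h ▸ (exp_lt_exp.mpr hm : exp 0 < exp m))
  have hx : v x ≠ 0 := fun h0 ↦ by simp [h0, hp, h] at hpow
  rw [h, ← exp_log hx, ← exp_nsmul, exp_inj] at hpow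
  exact ⟨log (v x), by rw [hpow, nsmul_eq_mul]⟩

end Valuation

namespace RatFunc

variable {K : Type*} [Field K]

theorem inftyValuation_C_mul_X_pow_add_C_div_X_pow [DecidableEq (RatFunc K)] {a : K} (ha : a ≠ 0)
    (b : K) {m : ℕ} (hm : m ≠ 0) (k : ℕ) :
    inftyValuation K ((C a * X ^ m + C b) / X ^ k) = exp ((m : ℤ) - k) := by
  have hlead : inftyValuation K (C a * X ^ m) = exp (m : ℤ) := by
    simp [inftyValuation.C K ha]
  rw [map_div₀, Valuation.map_add_eq_of_lt_left, hlead]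
  · simp
  · rw [hlead]
    exact (Valuation.IsTrivialOn.valuation_algebraMap_le_one _ b).trans_lt
      (exp_lt_exp.mpr (by omega) : exp 0 < exp (m : ℤ))

instance : ((idealX K).valuation (RatFunc K)).IsTrivialOn K :=
  Valuation.IsTrivialOn.of_le_one _ fun c ↦ by
    rw [IsScalarTower.algebraMap_apply K K[X] (RatFunc K)]
    exact IsDedekindDomain.HeightOneSpectrum.valuation_le_one _ _

theorem idealX_valuation_C_mul_X_pow_add_C_div_X_pow (a : K) {b : K} (hb : b ≠ 0)
    {m : ℕ} (hm : m ≠ 0) (k : ℕ) :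
    (idealX K).valuation (RatFunc K) ((C a * X ^ m + C b) / X ^ k) = exp (k : ℤ) := by
  set v := (idealX K).valuation (RatFunc K)
  have hconst : v (C b) = 1 := Valuation.IsTrivialOn.eq_one b hb
  rw [map_div₀, Valuation.map_add_eq_of_lt_right, hconst]
  · simp [v]
  · rw [hconst, map_mul]
    calc v (C a) * v (X ^ m) ≤ 1 * v (X ^ m) :=
          mul_le_mul_left (Valuation.IsTrivialOn.valuation_algebraMap_le_one _ a) _
      _ < 1 := by
        simpa [v] using (exp_lt_exp.mpr (by omega) : exp (-(m : ℤ)) < exp 0)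

end RatFunc

theorem CharP.intCast_ne_zero_or_intCast_ne_zero (R : Type*) [Ring R] (p : ℕ) [CharP R p]
    (hp : p ≠ 1) {a b : ℤ} (hab : Nat.gcd (Int.gcd a b) p = 1) : (a : R) ≠ 0 ∨ (b : R) ≠ 0 := by
  by_contra! h
  simp only [CharP.intCast_eq_zero_iff R p] at h
  have hdvd : p ∣ Int.gcd a b := Int.ofNat_dvd.mp (Int.dvd_coe_gcd h.1 h.2)
  exact hp (Nat.dvd_one.mp (hab ▸ Nat.dvd_gcd hdvd dvd_rfl))

open RatFunc

theorem not_artin_schreier (p : ℕ) [Fact p.Prime] (hp : 3 < p) (a b : ℤ)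
    (hab : Nat.gcd (Int.gcd a b) p = 1) :
    ¬ ∃ h : RatFunc (AlgebraicClosure (ZMod p)),
      (RatFunc.C ((a : AlgebraicClosure (ZMod p))) * RatFunc.X ^ 5 +
          RatFunc.C ((b : AlgebraicClosure (ZMod p)))) / RatFunc.X ^ 3
        = h ^ p - h := by
  classical
  rintro ⟨h, hR⟩
  have hp0 : p ≠ 0 := by omega
  rcases CharP.intCast_ne_zero_or_intCast_ne_zero (AlgebraicClosure (ZMod p)) p (by omega) hab
    with ha | hb
  · have hdvd := (inftyValuation _).dvd_of_map_pow_sub_self_eq_exp hp0 (by norm_num)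
      (hR ▸ inftyValuation_C_mul_X_pow_add_C_div_X_pow ha _ (by norm_num) 3)
    have hle := Int.le_of_dvd (by norm_num) hdvd
    omega
  · have hdvd := ((idealX _).valuation _).dvd_of_map_pow_sub_self_eq_exp hp0 (by norm_num)
      (hR ▸ idealX_valuation_C_mul_X_pow_add_C_div_X_pow _ hb (by norm_num) 3)
    have hle := Int.le_of_dvd (by norm_num) hdvd
    omega
end
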